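/- arXiv:1301.3998 — 5 statements merged into one kernel-verified Lean document; each statement's English description precedes it below -/
import Mathlib

section
/- Let K be a field, a, b ∈ K \ {0}, and σ the K-automorphism of K(x,y) with σ(x) = a/x, σ(y) = b/y. Define u = (x - a/x)/(xy - ab/(xy)) and v = (y - b/y)/(xy - ab/(xy)). Then u and v are fixed by σ, and the fixed field K(x,y)^⟨σ⟩ equals K(u,v). -/
/-!
The substitution σ negates `x - a/x`, `y - b/y` and `xy - ab/(xy)`, so it fixes the quotients
`u` and `v`. Conversely `x = u·xy + a·v` and `y = b·u + v·xy`, so `K(x,y) = K(u,v)(xy)`, and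
multiplying these two identities shows that `xy` is a root of the quadratic
`uv·T² + (bu² + av² - 1)·T + ab·uv` over `K(u,v)`. Hence `[K(x,y) : K(u,v)] ≤ 2`, which is the
degree of `K(x,y)` over the fixed field of the involution σ; since `K(u,v)` lies in that fixed
field, the two coincide.
-/

open IntermediateField Polynomial Module

section FixedField

variable {K F : Type*} [Field K] [Field F] [Algebra K F]

theorem mem_fixedField_zpowers_iff {σ : F ≃ₐ[K] F} {z : F} :
    z ∈ fixedField (Subgroup.zpowers σ) ↔ σ z = z :=
  ⟨fun h ↦ h ⟨σ, Subgroup.mem_zpowers σ⟩, fun h g ↦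
    (Subgroup.zpowers_le.mpr h : Subgroup.zpowers σ ≤ MulAction.stabilizer _ z) g.2⟩

theorem AlgEquiv.eq_one_of_adjoin_eq_top {S : Set F} (hS : adjoin K S = ⊤) {τ : F ≃ₐ[K] F}
    (hτ : ∀ z ∈ S, τ z = z) : τ = 1 := by
  have hle : adjoin K S ≤ fixedField (Subgroup.zpowers τ) :=
    adjoin_le_iff.mpr fun z hz ↦ mem_fixedField_zpowers_iff.mpr (hτ z hz)
  ext z
  exact mem_fixedField_zpowers_iff.mp (hle (hS ▸ trivial))

theorem fixedField_eq_of_le_of_finrank_le (H : Subgroup (F ≃ₐ[K] F)) [Finite H]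
    {E : IntermediateField K F} [FiniteDimensional E F] (hle : E ≤ fixedField H)
    (hrank : finrank E F ≤ Nat.card H) : fixedField H = E := by
  have : Fintype H := Fintype.ofFinite H
  refine (eq_of_le_of_finrank_le' hle ?_).symm
  rwa [← Fintype.card_eq_nat_card, ← FixedPoints.finrank_eq_card H F] at hrank

theorem fixedField_zpowers_eq_of_le_of_finrank_le {σ : F ≃ₐ[K] F} {E : IntermediateField K F}
    [FiniteDimensional E F] (hle : E ≤ fixedField (Subgroup.zpowers σ))
    (hrank : finrank E F ≤ orderOf σ) : fixedField (Subgroup.zpowers σ) = E := by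
  have : Finite (Subgroup.zpowers σ) := Nat.finite_of_card_ne_zero <| by
    rw [Nat.card_zpowers]
    exact (finrank_pos.trans_le hrank).ne'
  exact fixedField_eq_of_le_of_finrank_le _ hle (by rwa [Nat.card_zpowers])

theorem eq_top_of_adjoin_subset {E : IntermediateField K F} {L : IntermediateField E F}
    {S : Set F} (hS : adjoin K S = ⊤) (hSL : S ⊆ L) : L = ⊤ := by
  rw [← restrictScalars_eq_top_iff (K := K), eq_top_iff, ← hS]
  exact adjoin_le_iff.mpr hSL

end FixedField

theorem finrank_le_natDegree_of_adjoin_eq_top {E F : Type*} [Field E] [Field F] [Algebra E F]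
    {s : F} (hs : E⟮s⟯ = ⊤) {p : E[X]} (hp : p ≠ 0) (hps : aeval s p = 0) :
    FiniteDimensional E F ∧ finrank E F ≤ p.natDegree := by
  have hint : IsIntegral E s := IsAlgebraic.isIntegral ⟨p, hp, hps⟩
  have hrank : finrank E F = (minpoly E s).natDegree := by
    rw [← finrank_top', ← hs, adjoin.finrank hint]
  exact ⟨Module.finite_of_finrank_pos (hrank ▸ minpoly.natDegree_pos hint),
    hrank ▸ natDegree_le_natDegree (minpoly.degree_le_of_ne_zero E s hp hps)⟩

theorem AlgebraicIndependent.aeval_ne_algebraMap {R A ι : Type*} [CommRing R] [CommRing A]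
    [Algebra R A] {x : ι → A} (hx : AlgebraicIndependent R x) {p : MvPolynomial ι R}
    (hp : MvPolynomial.constantCoeff p = 0) {c : R} (hc : c ≠ 0) :
    MvPolynomial.aeval x p ≠ algebraMap R A c := by
  intro h
  have hpc : p = MvPolynomial.C c := hx (by rw [h, MvPolynomial.aeval_C])
  exact hc (by simpa [hpc] using hp)

theorem sub_div_self_ne_zero {F : Type*} [Field F] {z c : F} (hz : z ≠ 0) (hzc : z ^ 2 ≠ c) :
    z - c / z ≠ 0 := by
  rw [sub_ne_zero, ne_eq, eq_div_iff hz, ← sq]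
  exact hzc

section Involution

variable {K F : Type*} [Field K] [Field F] [Algebra K F]

theorem AlgebraicIndependent.sq_ne_algebraMap_of_pair {x y : F}
    (hind : AlgebraicIndependent K ![x, y]) {a b : K} (ha : a ≠ 0) (hb : b ≠ 0) :
    x ^ 2 ≠ algebraMap K F a ∧ y ^ 2 ≠ algebraMap K F b ∧
      (x * y) ^ 2 ≠ algebraMap K F a * algebraMap K F b := by
  have hx := hind.aeval_ne_algebraMap (p := .X 0 ^ 2) (by simp) ha
  have hy := hind.aeval_ne_algebraMap (p := .X 1 ^ 2) (by simp) hb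
  have hxy := hind.aeval_ne_algebraMap (p := (.X 0 * .X 1) ^ 2) (by simp) (mul_ne_zero ha hb)
  simp only [map_mul, map_pow, MvPolynomial.aeval_X] at hx hy hxy
  exact ⟨hx, hy, hxy⟩

theorem AlgEquiv.map_sub_div_eq_neg {σ : F ≃ₐ[K] F} {c : K} (hc : c ≠ 0) {z : F} (hz : z ≠ 0)
    (hσz : σ z = algebraMap K F c / z) :
    σ (z - algebraMap K F c / z) = -(z - algebraMap K F c / z) := by
  have : algebraMap K F c ≠ 0 := (_root_.map_ne_zero _).mpr hc
  rw [map_sub, map_div₀, hσz, AlgEquiv.commutes]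
  field_simp
  ring

theorem AlgEquiv.map_div_eq_self_of_map_eq_neg {σ : F ≃ₐ[K] F} {p q : F} (hp : σ p = -p)
    (hq : σ q = -q) : σ (p / q) = p / q := by
  rw [map_div₀, hp, hq, neg_div_neg_eq]

theorem AlgEquiv.sq_apply_of_apply_eq_div {σ : F ≃ₐ[K] F} {c : K} (hc : c ≠ 0) {z : F}
    (hσz : σ z = algebraMap K F c / z) : (σ ^ 2) z = z := by
  rw [sq, AlgEquiv.mul_apply, hσz, map_div₀, AlgEquiv.commutes, hσz,
    div_div_cancel₀ ((_root_.map_ne_zero _).mpr hc)]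

theorem AlgEquiv.orderOf_eq_two_of_apply_eq_div {σ : F ≃ₐ[K] F} {a b : K} (ha : a ≠ 0)
    (hb : b ≠ 0) {x y : F} (hgen : adjoin K {x, y} = ⊤) (hx0 : x ≠ 0)
    (hx2 : x ^ 2 ≠ algebraMap K F a) (hx : σ x = algebraMap K F a / x)
    (hy : σ y = algebraMap K F b / y) : orderOf σ = 2 := by
  refine orderOf_eq_prime (AlgEquiv.eq_one_of_adjoin_eq_top hgen ?_) ?_
  · rintro z (rfl | rfl | _)
    exacts [σ.sq_apply_of_apply_eq_div ha hx, σ.sq_apply_of_apply_eq_div hb hy]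
  · rintro rfl
    rw [AlgEquiv.one_apply, eq_div_iff hx0] at hx
    exact hx2 (by rw [sq, hx])

theorem x_eq_and_y_eq_of_uv {A B x y u v : F} (hx : x ≠ 0) (hy : y ≠ 0)
    (hxy : (x * y) ^ 2 ≠ A * B)
    (hu : u = (x - A / x) / (x * y - A * B / (x * y)))
    (hv : v = (y - B / y) / (x * y - A * B / (x * y))) :
    x = u * (x * y) + A * v ∧ y = B * u + v * (x * y) := by
  have hD : x ^ 2 * y ^ 2 - A * B ≠ 0 := by rw [← mul_pow]; exact sub_ne_zero.mpr hxy
  have hD' : y ^ 2 * x ^ 2 - B * A ≠ 0 := by rwa [mul_comm, mul_comm B]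
  subst hu hv
  constructor <;> field_simp <;> ring

theorem finrank_adjoin_le_two {a b : K} {x y u v : F} (hgen : adjoin K {x, y} = ⊤)
    (hu0 : u ≠ 0) (hv0 : v ≠ 0) (hX : x = u * (x * y) + algebraMap K F a * v)
    (hY : y = algebraMap K F b * u + v * (x * y)) :
    FiniteDimensional (adjoin K {u, v}) F ∧ finrank (adjoin K {u, v}) F ≤ 2 := by
  set E := adjoin K {u, v}
  let u' : E := ⟨u, subset_adjoin K _ (by simp)⟩
  let v' : E := ⟨v, subset_adjoin K _ (by simp)⟩
  have hs : E⟮x * y⟯ = ⊤ := by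
    have hu : u ∈ E⟮x * y⟯ := E⟮x * y⟯.algebraMap_mem u'
    have hv : v ∈ E⟮x * y⟯ := E⟮x * y⟯.algebraMap_mem v'
    have hxy : x * y ∈ E⟮x * y⟯ := mem_adjoin_simple_self E _
    have hK (c : K) : algebraMap K F c ∈ E⟮x * y⟯ := (E⟮x * y⟯.restrictScalars K).algebraMap_mem c
    have hxmem := add_mem (mul_mem hu hxy) (mul_mem (hK a) hv)
    have hymem := add_mem (mul_mem (hK b) hu) (mul_mem hv hxy)
    rw [← hX] at hxmem
    rw [← hY] at hymem
    exact eq_top_of_adjoin_subset hgen (Set.pair_subset_iff.mpr ⟨hxmem, hymem⟩)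
  set p : E[X] := C (u' * v') * X ^ 2
    + C (algebraMap K E b * u' ^ 2 + algebraMap K E a * v' ^ 2 - 1) * X
    + C (algebraMap K E (a * b) * u' * v')
  have hp : p.natDegree = 2 := natDegree_quadratic <|
    mul_ne_zero (ne_of_apply_ne Subtype.val hu0) (ne_of_apply_ne Subtype.val hv0)
  have hroot : aeval (x * y) p = 0 := by
    simp only [p, map_add, map_mul, map_sub, map_pow, aeval_X, aeval_C, map_one,
      ← IsScalarTower.algebraMap_apply]
    change u * v * (x * y) ^ 2 + (algebraMap K F b * u ^ 2 + algebraMap K F a * v ^ 2 - 1) * (x * y)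
      + algebraMap K F a * algebraMap K F b * u * v = 0
    linear_combination -y * hX - (u * (x * y) + algebraMap K F a * v) * hY
  exact hp ▸ finrank_le_natDegree_of_adjoin_eq_top hs (ne_zero_of_natDegree_gt (hp ▸ two_pos)) hroot

end Involution

/-- Let `K` be a field, `a, b ∈ K \ {0}`, and `σ` the `K`-automorphism of `K(x,y)`
with `σ(x) = a/x`, `σ(y) = b/y`. Define `u = (x - a/x)/(xy - ab/(xy))` and
`v = (y - b/y)/(xy - ab/(xy))`. Then `u` and `v` are fixed by `σ`, and the fixed field
`K(x,y)^⟨σ⟩` equals `K(u,v)`. -/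
theorem stmt1 (K F : Type*) [Field K] [Field F] [Algebra K F]
    (a b : K) (ha : a ≠ 0) (hb : b ≠ 0)
    (x y : F) (hind : AlgebraicIndependent K ![x, y])
    (hgen : IntermediateField.adjoin K {x, y} = ⊤)
    (σ : F ≃ₐ[K] F)
    (hx : σ x = algebraMap K F a / x) (hy : σ y = algebraMap K F b / y)
    (u v : F)
    (hu : u = (x - algebraMap K F a / x) /
      (x * y - algebraMap K F (a * b) / (x * y)))
    (hv : v = (y - algebraMap K F b / y) /
      (x * y - algebraMap K F (a * b) / (x * y))) :
    σ u = u ∧ σ v = v ∧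
      IntermediateField.fixedField (Subgroup.zpowers σ) = IntermediateField.adjoin K {u, v} := by
  have hx0 : x ≠ 0 := by simpa using hind.ne_zero 0
  have hy0 : y ≠ 0 := by simpa using hind.ne_zero 1
  have hxy0 : x * y ≠ 0 := mul_ne_zero hx0 hy0
  obtain ⟨hx2, hy2, hxy2⟩ := hind.sq_ne_algebraMap_of_pair ha hb
  have hσxy : σ (x * y) = algebraMap K F (a * b) / (x * y) := by
    rw [map_mul, hx, hy, map_mul, div_mul_div_comm]
  have hσD := σ.map_sub_div_eq_neg (mul_ne_zero ha hb) hxy0 hσxy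
  have hσu : σ u = u := hu ▸ σ.map_div_eq_self_of_map_eq_neg (σ.map_sub_div_eq_neg ha hx0 hx) hσD
  have hσv : σ v = v := hv ▸ σ.map_div_eq_self_of_map_eq_neg (σ.map_sub_div_eq_neg hb hy0 hy) hσD
  rw [map_mul] at hu hv
  have hD := sub_div_self_ne_zero hxy0 hxy2
  have hu0 : u ≠ 0 := hu ▸ div_ne_zero (sub_div_self_ne_zero hx0 hx2) hD
  have hv0 : v ≠ 0 := hv ▸ div_ne_zero (sub_div_self_ne_zero hy0 hy2) hD
  obtain ⟨hX, hY⟩ := x_eq_and_y_eq_of_uv hx0 hy0 hxy2 hu hv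
  obtain ⟨_, hrank⟩ := finrank_adjoin_le_two hgen hu0 hv0 hX hY
  refine ⟨hσu, hσv, fixedField_zpowers_eq_of_le_of_finrank_le ?_ ?_⟩
  · exact adjoin_le_iff.mpr (Set.pair_subset_iff.mpr
      ⟨mem_fixedField_zpowers_iff.mpr hσu, mem_fixedField_zpowers_iff.mpr hσv⟩)
  · rwa [σ.orderOf_eq_two_of_apply_eq_div ha hb hgen hx0 hx2 hx hy]
end

section
/- The Picard group of the ring Z[T]/(T³ - 1) is trivial, i.e., every rank-one projective module over Z[T]/(T³ - 1) is free. -/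
open Polynomial TensorProduct

/-- The ring `ℤ[T]/(T³ - 1)`. -/
abbrev RingT3sub1 : Type := ℤ[X] ⧸ Ideal.span {(X : ℤ[X]) ^ 3 - 1}

/-!
`R = ℤ[T]/(T³ - 1)` is the fibre product of `ℤ = R/(T - 1)` and `ℤ[ζ₃] = R/(T² + T + 1)` over
`𝔽₃`, where both `T` and `ζ₃` are sent to `1`. The base changes of an invertible `R`-module `M`
to the principal ideal domains `ℤ` and `ℤ[ζ₃]` are free of rank one, say on `u` and `v`. Their
images generate `𝔽₃ ⊗ M ≅ 𝔽₃`, so they differ by a unit `±1` of `𝔽₃`; this lifts to a unit of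
`ℤ`, and rescaling `u` makes the images agree. As `M` is flat,
`0 → M → (ℤ ⊗ M) × (ℤ[ζ₃] ⊗ M) → 𝔽₃ ⊗ M` is exact, and the compatible pair `(u, v)` comes from
a generator of `M`.
-/

open Function LinearMap CommRing

universe u

section Generator

variable {A N : Type*} [CommRing A] [AddCommGroup N] [Module A N]

theorem bijective_toSpanSingleton_symm_unit (e : N ≃ₗ[A] A) (a : Aˣ) :
    Bijective (toSpanSingleton A N (e.symm a)) := by
  have : ⇑(toSpanSingleton A N (e.symm a)) = e.symm ∘ (· * (a : A)) := by
    ext; simp [← map_smul]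
  rw [this]
  exact e.symm.bijective.comp a.mulRight_bijective

theorem exists_unit_smul_eq_of_bijective_toSpanSingleton {x y : N}
    (hx : Bijective (toSpanSingleton A N x)) (hy : Surjective (toSpanSingleton A N y)) :
    ∃ c : Aˣ, c • x = y := by
  obtain ⟨c, hc⟩ := hx.2 y
  obtain ⟨d, hd⟩ := hy x
  have hdc : d * c = 1 := hx.1 <| by
    simp only [toSpanSingleton_apply, mul_smul] at hc hd ⊢
    rw [hc, hd, one_smul]
  exact ⟨⟨c, d, by rw [mul_comm, hdc], hdc⟩, hc⟩

end Generator

section BaseChange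

variable {R A k M : Type*} [CommRing R] [CommRing A] [CommRing k] [Algebra R A] [Algebra R k]
  [Algebra A k] [IsScalarTower R A k] [AddCommGroup M] [Module R M]

theorem rTensor_toAlgHom_eq_cancelBaseChange (x : A ⊗[R] M) :
    (IsScalarTower.toAlgHom R A k).toLinearMap.rTensor M x =
      AlgebraTensorModule.cancelBaseChange R A k k M (1 ⊗ₜ x) := by
  induction x using TensorProduct.induction_on with
  | zero => simp
  | tmul a m => simp [Algebra.smul_def]
  | add x y hx hy => simp only [map_add, tmul_add, hx, hy]

theorem rTensor_toAlgHom_smul (a : A) (x : A ⊗[R] M) :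
    (IsScalarTower.toAlgHom R A k).toLinearMap.rTensor M (a • x) =
      algebraMap A k a • (IsScalarTower.toAlgHom R A k).toLinearMap.rTensor M x := by
  rw [rTensor_toAlgHom_eq_cancelBaseChange, rTensor_toAlgHom_eq_cancelBaseChange, tmul_smul,
    ← algebraMap_smul k a, map_smul]

theorem bijective_toSpanSingleton_rTensor_toAlgHom {u : A ⊗[R] M}
    (hu : Bijective (toSpanSingleton A _ u)) :
    Bijective (toSpanSingleton k _ ((IsScalarTower.toAlgHom R A k).toLinearMap.rTensor M u)) := by
  let e := (AlgebraTensorModule.rid A k k).symm ≪≫ₗ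
    (LinearEquiv.ofBijective _ hu).baseChange A k A (A ⊗[R] M) ≪≫ₗ
    AlgebraTensorModule.cancelBaseChange R A k k M
  have : toSpanSingleton k _ ((IsScalarTower.toAlgHom R A k).toLinearMap.rTensor M u) = e := by
    ext
    simp [e, rTensor_toAlgHom_eq_cancelBaseChange]
  rw [this]
  exact e.bijective

end BaseChange

section Pullback

variable {R A B k : Type*} [CommRing R] [CommRing A] [CommRing B] [CommRing k]
  [Algebra R A] [Algebra R B] [Algebra R k] [Algebra A k] [Algebra B k]
  [IsScalarTower R A k] [IsScalarTower R B k]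

variable (R A B k) in
noncomputable def pullbackDiff : A × B →ₗ[R] k :=
  (IsScalarTower.toAlgHom R A k).toLinearMap ∘ₗ fst R A B -
    (IsScalarTower.toAlgHom R B k).toLinearMap ∘ₗ snd R A B

theorem exact_prod_pullbackDiff
    (hlift : ∀ a b, algebraMap A k a = algebraMap B k b →
      ∃ r : R, algebraMap R A r = a ∧ algebraMap R B r = b) :
    Exact ((Algebra.linearMap R A).prod (Algebra.linearMap R B)) (pullbackDiff R A B k) := by
  rintro ⟨a, b⟩
  simp only [pullbackDiff, LinearMap.sub_apply, coe_comp, AlgHom.coe_toLinearMap,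
    IsScalarTower.coe_toAlgHom', coe_fst, Function.comp_apply, coe_snd, sub_eq_zero,
    Set.mem_range, LinearMap.prod_apply, Function.prod_apply, Algebra.linearMap_apply,
    Prod.mk.injEq]
  refine ⟨hlift a b, ?_⟩
  rintro ⟨r, rfl, rfl⟩
  simp only [← IsScalarTower.algebraMap_apply]

variable {M : Type*} [AddCommGroup M] [Module R M]

theorem rTensor_pullbackDiff_prodLeft_symm (x : A ⊗[R] M) (y : B ⊗[R] M) :
    (pullbackDiff R A B k).rTensor M ((prodLeft R R A B M).symm (x, y)) =
      (IsScalarTower.toAlgHom R A k).toLinearMap.rTensor M x -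
        (IsScalarTower.toAlgHom R B k).toLinearMap.rTensor M y := by
  have : (pullbackDiff R A B k).rTensor M =
      ((IsScalarTower.toAlgHom R A k).toLinearMap.rTensor M ∘ₗ fst R _ _ -
        (IsScalarTower.toAlgHom R B k).toLinearMap.rTensor M ∘ₗ snd R _ _) ∘ₗ
          (prodLeft R R A B M).toLinearMap := by
    ext <;> simp [pullbackDiff]
  simp [this]

theorem nonempty_linearEquiv_of_generators [Module.Flat R M]
    (hinj : ∀ r : R, algebraMap R A r = 0 → algebraMap R B r = 0 → r = 0)
    (hlift : ∀ a b, algebraMap A k a = algebraMap B k b →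
      ∃ r : R, algebraMap R A r = a ∧ algebraMap R B r = b)
    {u : A ⊗[R] M} {v : B ⊗[R] M}
    (hu : Bijective (toSpanSingleton A _ u)) (hv : Bijective (toSpanSingleton B _ v))
    (huv : (IsScalarTower.toAlgHom R A k).toLinearMap.rTensor M u =
      (IsScalarTower.toAlgHom R B k).toLinearMap.rTensor M v) :
    Nonempty (M ≃ₗ[R] R) := by
  let f := (Algebra.linearMap R A).prod (Algebra.linearMap R B)
  let P := TensorProduct.prodLeft R R A B M
  let ι := P.toLinearMap ∘ₗ f.rTensor M
  let δ := (pullbackDiff R A B k).rTensor M ∘ₗ P.symm.toLinearMap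
  have hι : Injective ι := P.injective.comp <| Module.Flat.rTensor_preserves_injective_linearMap f
    fun r s hrs ↦ sub_eq_zero.mp <| hinj _ (by simpa [f, sub_eq_zero] using congrArg Prod.fst hrs)
      (by simpa [f, sub_eq_zero] using congrArg Prod.snd hrs)
  have hexact : Exact ι δ :=
    (P.conj_exact_iff_exact _ _).mpr (Module.Flat.rTensor_exact M (exact_prod_pullbackDiff hlift))
  have hδ : ∀ x y, δ (x, y) = (IsScalarTower.toAlgHom R A k).toLinearMap.rTensor M x -
      (IsScalarTower.toAlgHom R B k).toLinearMap.rTensor M y :=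
    rTensor_pullbackDiff_prodLeft_symm
  obtain ⟨w, hw⟩ : ∃ w, ι w = (u, v) := (hexact _).mp (by rw [hδ, huv, sub_self])
  have hιw : ∀ r : R, ι (r • w) = (algebraMap R A r • u, algebraMap R B r • v) := by
    intro r
    rw [map_smul, hw, Prod.smul_mk, algebraMap_smul, algebraMap_smul]
  refine ⟨(TensorProduct.lid R M).symm ≪≫ₗ
    (LinearEquiv.ofBijective (toSpanSingleton R _ w) ⟨?_, ?_⟩).symm⟩
  · refine (injective_iff_map_eq_zero _).mpr fun r hr ↦ ?_
    have h0 := hιw r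
    rw [← toSpanSingleton_apply, hr, map_zero, eq_comm, Prod.mk_eq_zero] at h0
    exact hinj r ((injective_iff_map_eq_zero _).mp hu.1 _ h0.1)
      ((injective_iff_map_eq_zero _).mp hv.1 _ h0.2)
  · intro z
    obtain ⟨a, ha⟩ := hu.2 (ι z).1
    obtain ⟨b, hb⟩ := hv.2 (ι z).2
    have hz : ι z = (a • u, b • v) := Prod.ext ha.symm hb.symm
    have hab : algebraMap A k a = algebraMap B k b := by
      apply (bijective_toSpanSingleton_rTensor_toAlgHom hu).1
      have := hexact.apply_apply_eq_zero z
      rwa [hz, hδ, rTensor_toAlgHom_smul, rTensor_toAlgHom_smul, ← huv, sub_eq_zero] at this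
    obtain ⟨r, rfl, rfl⟩ := hlift a b hab
    exact ⟨r, hι (by rw [toSpanSingleton_apply, hιw, hz])⟩

end Pullback

theorem CommRing.Pic.subsingleton_of_pullback {R A B k : Type u}
    [CommRing R] [CommRing A] [CommRing B] [CommRing k]
    [Algebra R A] [Algebra R B] [Algebra R k] [Algebra A k] [Algebra B k]
    [IsScalarTower R A k] [IsScalarTower R B k] [Subsingleton (Pic A)] [Subsingleton (Pic B)]
    (hinj : ∀ r : R, algebraMap R A r = 0 → algebraMap R B r = 0 → r = 0)
    (hlift : ∀ a b, algebraMap A k a = algebraMap B k b →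
      ∃ r : R, algebraMap R A r = a ∧ algebraMap R B r = b)
    (hunit : ∀ c : kˣ, ∃ a : Aˣ, algebraMap A k a = c) :
    Subsingleton (Pic R) := by
  refine Pic.subsingleton_iff.mpr fun M _ _ _ ↦ Module.Invertible.free_iff_linearEquiv.mpr ?_
  obtain ⟨eA⟩ : Nonempty (A ⊗[R] M ≃ₗ[A] A) :=
    Module.Invertible.free_iff_linearEquiv.mp inferInstance
  obtain ⟨eB⟩ : Nonempty (B ⊗[R] M ≃ₗ[B] B) :=
    Module.Invertible.free_iff_linearEquiv.mp inferInstance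
  have hu := bijective_toSpanSingleton_symm_unit eA 1
  have hv := bijective_toSpanSingleton_symm_unit eB 1
  obtain ⟨c, hc⟩ := exists_unit_smul_eq_of_bijective_toSpanSingleton
    (bijective_toSpanSingleton_rTensor_toAlgHom (k := k) hu)
    (bijective_toSpanSingleton_rTensor_toAlgHom hv).2
  obtain ⟨a, ha⟩ := hunit c
  refine nonempty_linearEquiv_of_generators hinj hlift
    (bijective_toSpanSingleton_symm_unit eA a) hv ?_
  rw [← hc, Units.val_one, ← mul_one (a : A), ← smul_eq_mul, map_smul, rTensor_toAlgHom_smul, ha,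
    Units.smul_def]

namespace RingT3sub1

open NumberField

local notation "K" => CyclotomicField 3 ℚ

instance : IsCyclotomicExtension {3} ℚ K := CyclotomicField.isCyclotomicExtension 3 ℚ

instance : IsPrincipalIdealRing (𝓞 K) := IsCyclotomicExtension.Rat.three_pid K

theorem zeta_spec : IsPrimitiveRoot (IsCyclotomicExtension.zeta 3 ℚ K) 3 :=
  IsCyclotomicExtension.zeta_spec 3 ℚ K

noncomputable abbrev ζ : 𝓞 K := zeta_spec.toInteger

theorem minpoly_zeta : minpoly ℤ ζ = cyclotomic 3 ℤ := by
  rw [← RingOfIntegers.minpoly_coe, cyclotomic_eq_minpoly zeta_spec (by norm_num)]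
  rfl

theorem aeval_zeta_cyclotomic : aeval ζ (cyclotomic 3 ℤ) = 0 :=
  minpoly_zeta ▸ minpoly.aeval ℤ ζ

theorem X_pow_three_sub_one_eq_cyclotomic_mul :
    (X ^ 3 - 1 : ℤ[X]) = cyclotomic 3 ℤ * (X - 1) := by
  rw [cyclotomic_three]; ring

noncomputable def evalOne : RingT3sub1 →+* ℤ :=
  Ideal.Quotient.lift _ (evalRingHom 1) fun p hp ↦ by
    obtain ⟨q, rfl⟩ := Ideal.mem_span_singleton'.mp hp
    simp

noncomputable def toRingOfIntegers : RingT3sub1 →+* 𝓞 K :=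
  Ideal.Quotient.lift _ (aeval ζ).toRingHom fun p hp ↦ by
    obtain ⟨q, rfl⟩ := Ideal.mem_span_singleton'.mp hp
    simp only [AlgHom.toRingHom_eq_coe, RingHom.coe_coe, map_mul,
      X_pow_three_sub_one_eq_cyclotomic_mul, aeval_zeta_cyclotomic, zero_mul, mul_zero]

theorem aeval_one_minpoly_integralPowerBasis_gen :
    aeval (1 : ZMod 3) (minpoly ℤ zeta_spec.integralPowerBasis.gen) = 0 := by
  rw [IsPrimitiveRoot.integralPowerBasis_gen, minpoly_zeta, cyclotomic_three]
  simp only [map_add, map_pow, aeval_X, one_pow, map_one]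
  decide

noncomputable def residue : 𝓞 K →ₐ[ℤ] ZMod 3 :=
  zeta_spec.integralPowerBasis.lift 1 aeval_one_minpoly_integralPowerBasis_gen

theorem residue_aeval_zeta (p : ℤ[X]) : residue (aeval ζ p) = ((p.eval 1 : ℤ) : ZMod 3) := by
  have hζ : residue ζ = 1 := by
    have := zeta_spec.integralPowerBasis.lift_gen _ aeval_one_minpoly_integralPowerBasis_gen
    rwa [IsPrimitiveRoot.integralPowerBasis_gen] at this
  rw [← aeval_algHom_apply, hζ, aeval_def, eval₂_at_one, eq_intCast]

noncomputable instance : Algebra RingT3sub1 ℤ := evalOne.toAlgebra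
noncomputable instance : Algebra RingT3sub1 (𝓞 K) := toRingOfIntegers.toAlgebra
noncomputable instance : Algebra (𝓞 K) (ZMod 3) := residue.toRingHom.toAlgebra
noncomputable instance : Algebra RingT3sub1 (ZMod 3) :=
  (residue.toRingHom.comp toRingOfIntegers).toAlgebra

instance : IsScalarTower RingT3sub1 (𝓞 K) (ZMod 3) := .of_algebraMap_eq' rfl

instance : IsScalarTower RingT3sub1 ℤ (ZMod 3) := .of_algebraMap_eq' <| RingHom.ext fun r ↦ by
  obtain ⟨p, rfl⟩ := Ideal.Quotient.mk_surjective r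
  exact (residue_aeval_zeta p).trans (eq_intCast (algebraMap ℤ (ZMod 3)) (p.eval 1)).symm

theorem eq_zero_of_algebraMap_eq_zero (r : RingT3sub1) (h1 : algebraMap RingT3sub1 ℤ r = 0)
    (h2 : algebraMap RingT3sub1 (𝓞 K) r = 0) : r = 0 := by
  obtain ⟨p, rfl⟩ := Ideal.Quotient.mk_surjective r
  change p.eval 1 = 0 at h1
  change aeval ζ p = 0 at h2
  obtain ⟨q, rfl⟩ : cyclotomic 3 ℤ ∣ p :=
    minpoly_zeta ▸ minpoly.isIntegrallyClosed_dvd (RingOfIntegers.isIntegral ζ) h2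
  have hq : X - C 1 ∣ q := by
    rw [dvd_iff_isRoot, IsRoot]
    simpa [eval_one_cyclotomic_prime] using h1
  rw [Ideal.Quotient.eq_zero_iff_mem, Ideal.mem_span_singleton,
    X_pow_three_sub_one_eq_cyclotomic_mul]
  simpa using mul_dvd_mul_left _ hq

theorem exists_algebraMap_eq (a : ℤ) (b : 𝓞 K)
    (hab : algebraMap ℤ (ZMod 3) a = algebraMap (𝓞 K) (ZMod 3) b) :
    ∃ r : RingT3sub1, algebraMap _ ℤ r = a ∧ algebraMap _ (𝓞 K) r = b := by
  obtain ⟨q, rfl⟩ := zeta_spec.integralPowerBasis.exists_eq_aeval' b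
  rw [IsPrimitiveRoot.integralPowerBasis_gen] at hab ⊢
  change ((a : ℤ) : ZMod 3) = residue (aeval ζ q) at hab
  rw [residue_aeval_zeta, ZMod.intCast_eq_intCast_iff_dvd_sub] at hab
  obtain ⟨m, hm⟩ := hab
  refine ⟨Ideal.Quotient.mk _ (q - C m * cyclotomic 3 ℤ), ?_, ?_⟩
  · change eval 1 (q - C m * cyclotomic 3 ℤ) = a
    simp only [eval_sub, eval_mul, eval_C, eval_one_cyclotomic_prime]
    push_cast at hm ⊢
    linarith
  · change aeval ζ (q - C m * cyclotomic 3 ℤ) = aeval ζ q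
    rw [map_sub, map_mul, aeval_zeta_cyclotomic, mul_zero, sub_zero]

instance : Subsingleton (Pic RingT3sub1) :=
  Pic.subsingleton_of_pullback (k := ZMod 3) eq_zero_of_algebraMap_eq_zero exists_algebraMap_eq
    (by decide)

end RingT3sub1

theorem stmt3_general (M : Type) [AddCommGroup M] [Module RingT3sub1 M]
    (hinv : ∃ (N : Type) (_ : AddCommGroup N) (_ : Module RingT3sub1 N),
      Nonempty ((M ⊗[RingT3sub1] N) ≃ₗ[RingT3sub1] RingT3sub1)) :
    Module.Free RingT3sub1 M := by
  obtain ⟨N, _, _, ⟨e⟩⟩ := hinv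
  have : Module.Invertible RingT3sub1 M := .left e
  infer_instance

/-- The Picard group of `ℤ[T]/(T³ - 1)` is trivial, i.e. every rank-one
projective (= invertible) module over `ℤ[T]/(T³ - 1)` is free. -/
theorem stmt3 (M : Type) [AddCommGroup M] [Module RingT3sub1 M]
    [Module.Projective RingT3sub1 M]
    (hinv : ∃ (N : Type) (_ : AddCommGroup N) (_ : Module RingT3sub1 N),
      Nonempty ((M ⊗[RingT3sub1] N) ≃ₗ[RingT3sub1] RingT3sub1)) :
    Module.Free RingT3sub1 M :=
  stmt3_general M hinv
end

section
/- Let Λ = Z[T]/(T⁶ - 1) act on Z/9Z by T · j̄ = 2j̄ (i.e., T acts as multiplication by 2). Let Φ : Λ → Z/9Z be the Λ-module homomorphism sending 1 to 1̄. Then the kernel M of Φ is an ideal of Λ of index 9, and M is a projective Λ-module. -/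
open Polynomial

/-- `Λ = ℤ[T]/(T⁶-1)`, the group ring of the cyclic group of order 6. -/
abbrev Lam6 : Type := ℤ[X] ⧸ Ideal.span {(X : ℤ[X]) ^ 6 - 1}

/-- `ℤ/9ℤ` is a `Λ`-module with `T` acting as multiplication by `2`; since `ℤ/9ℤ` is cyclic
generated by `1̄`, the `Λ`-linear map `Φ : Λ → ℤ/9ℤ` with `Φ(1) = 1̄` is precisely the ring
homomorphism `Λ → ℤ/9ℤ`, `T ↦ 2` (so that the `Λ`-action on `ℤ/9ℤ` is via `Φ`). -/
noncomputable def Phi : Lam6 →+* ZMod 9 :=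
  Ideal.Quotient.lift _ ((evalRingHom (2 : ZMod 9)).comp
      (Polynomial.mapRingHom (Int.castRingHom (ZMod 9)))) (by
    intro a ha
    rw [Ideal.mem_span_singleton] at ha
    obtain ⟨c, rfl⟩ := ha
    rw [map_mul]
    have : ((evalRingHom (2 : ZMod 9)).comp
        (Polynomial.mapRingHom (Int.castRingHom (ZMod 9)))) ((X : ℤ[X]) ^ 6 - 1) = 0 := by
      simp only [RingHom.comp_apply, Polynomial.coe_mapRingHom, Polynomial.map_sub,
        Polynomial.map_pow, Polynomial.map_X, Polynomial.map_one, coe_evalRingHom,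
        eval_sub, eval_pow, eval_X, eval_one]
      decide
    rw [this, zero_mul])

/-! Since `Φ(T) = 2`, the kernel is `M = (T - 2, 9)`. In `Λ` the element `T - 2` divides
`T⁶ - 2⁶ = -63`, so `(T - 2) c = 9 · 28` for some `c`, and `28 = 1 + 9 · 3`. As `9` is a
non-zero-divisor, `m ↦ (m c / 9, -3 m)` is then a section of
`Λ² → M, (a, b) ↦ a (T - 2) + 9 b`, so `M` is a direct summand of `Λ²`. -/

theorem Ideal.projective_span_pair_of_mul_eq {R : Type*} [CommRing R] {x y c v : R}
    (hy : IsLeftRegular y) (h : x * c = y * (1 + y * v)) :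
    Module.Projective R (Ideal.span {x, y}) := by
  set I := Ideal.span {x, y}
  have hdvd (m : I) : (m : R) * c ∈ LinearMap.range (LinearMap.mulLeft R y) := by
    obtain ⟨a, b, hm⟩ := Ideal.mem_span_pair.mp m.2
    exact ⟨a * (1 + y * v) + b * c, by
      simp only [LinearMap.mulLeft_apply, ← hm]; linear_combination -a * h⟩
  let div : I →ₗ[R] R := (LinearEquiv.ofInjective _ hy).symm.toLinearMap ∘ₗ
      (LinearMap.mulRight R c ∘ₗ I.subtype).codRestrict _ hdvd
  have hdiv (m : I) : y * div m = m * c :=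
    congrArg Subtype.val ((LinearEquiv.ofInjective _ hy).apply_symm_apply ⟨_, hdvd m⟩)
  let comb : R × R →ₗ[R] I :=
    ((LinearMap.toSpanSingleton R R x).coprod (LinearMap.toSpanSingleton R R y)).codRestrict I
      fun ab => Ideal.mem_span_pair.mpr ⟨ab.1, ab.2, rfl⟩
  refine Module.Projective.of_split (div.prod (-v • I.subtype)) comb ?_
  ext m
  apply hy
  show y * (div m * x + -v * m * y) = y * m
  linear_combination x * hdiv m + (m : R) * h

namespace Lam6

noncomputable def T : Lam6 := Ideal.Quotient.mk _ X

theorem T_pow_six : T ^ 6 = 1 := by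
  rw [T, ← map_pow, ← map_one (Ideal.Quotient.mk _), Ideal.Quotient.eq]
  exact Ideal.subset_span rfl

theorem isLeftRegular_nine : IsLeftRegular (9 : Lam6) := by
  have hmonic : ((X : ℤ[X]) ^ 6 - 1).Monic := by
    simpa using monic_X_pow_sub_C (1 : ℤ) (n := 6) (by norm_num)
  have := (AdjoinRoot.powerBasis' hmonic).basis.isTorsionFree
  intro a b hab
  exact this.isSMulRegular (isRegular_iff_ne_zero.mpr (by norm_num : (9 : ℤ) ≠ 0))
    (by simpa [zsmul_eq_mul] using hab : (9 : ℤ) • a = (9 : ℤ) • b)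

theorem T_sub_two_mul : (T - 2) * (-4 * (T ^ 5 + 2 * T ^ 4 + 4 * T ^ 3 + 8 * T ^ 2 + 16 * T + 32)) =
    9 * (1 + 9 * 3) := by
  linear_combination -4 * T_pow_six

end Lam6

theorem Phi_mk (P : ℤ[X]) : Phi (Ideal.Quotient.mk _ P) = (P.eval 2 : ℤ) := by
  rw [Phi, Ideal.Quotient.lift_mk]
  simpa using eval_intCast_map (Int.castRingHom (ZMod 9)) P 2

open Lam6 in
theorem ker_Phi : RingHom.ker Phi = Ideal.span {T - 2, 9} := by
  apply le_antisymm
  · intro m hm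
    obtain ⟨P, rfl⟩ := Ideal.Quotient.mk_surjective m
    rw [RingHom.mem_ker, Phi_mk, ZMod.intCast_zmod_eq_zero_iff_dvd] at hm
    obtain ⟨k, hk⟩ := hm
    obtain ⟨Q, hQ⟩ := X_sub_C_dvd_sub_C_eval (a := (2 : ℤ)) (p := P)
    refine Ideal.mem_span_pair.mpr ⟨Ideal.Quotient.mk _ Q, Ideal.Quotient.mk _ (C k), ?_⟩
    have hP : P = Q * (X - C 2) + C k * 9 := by
      rw [sub_eq_iff_eq_add, hk] at hQ
      rw [hQ, C_mul, map_natCast, Nat.cast_ofNat]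
      ring
    rw [hP, T]
    simp only [map_add, map_mul, map_sub, map_ofNat]
  · refine Ideal.span_le.mpr (Set.insert_subset_iff.mpr ⟨?_, Set.singleton_subset_iff.mpr ?_⟩)
    · simp [RingHom.mem_ker, T, Phi_mk, map_ofNat]
    · show Phi 9 = 0
      rw [map_ofNat]
      decide

/-- `Φ(1) = 1̄`, `Φ` is surjective, its kernel `M = ker Φ` is an ideal of `Λ`
of index 9, and `M` is a projective `Λ`-module. -/
theorem stmt10 :
    Phi 1 = 1 ∧ Function.Surjective Phi ∧
      Nat.card (Lam6 ⧸ RingHom.ker Phi) = 9 ∧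
      Module.Projective Lam6 (RingHom.ker Phi) := by
  have hsurj : Function.Surjective Phi := ZMod.ringHom_surjective Phi
  refine ⟨map_one Phi, hsurj, ?_, ?_⟩
  · rw [Nat.card_congr (RingHom.quotientKerEquivOfSurjective hsurj).toEquiv, Nat.card_zmod]
  · rw [ker_Phi]
    exact Ideal.projective_span_pair_of_mul_eq Lam6.isLeftRegular_nine Lam6.T_sub_two_mul
end

section
/- Let K be a field and define a K-automorphism ρ of K(v₁, v₂) (rational functions in two variables) by ρ(v₁) = v₂ and ρ(v₂) = -1/(v₁v₂). Then ρ has order 3, and with w₁ = 1/(1 - v₁ + v₁v₂), w₂ = -v₁/(1 - v₁ + v₁v₂), one has K(v₁, v₂) = K(w₁, w₂) and ρ(w₁) = w₂, ρ(w₂) = -w₁ - w₂ + 1. -/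
/-! Everything follows from the transformation rule `ρ d = -d / v₁` of the common denominator
`d = 1 - v₁ + v₁ v₂`, which is nonzero by algebraic independence. Conversely `v₁ = -w₂ / w₁` and
`v₂ = (1 / w₁ - 1 + v₁) / v₁`, so `w₁, w₂` generate the same field. The orbit
`v₁ ↦ v₂ ↦ -1 / (v₁ v₂) ↦ v₁` shows that `ρ³` fixes the generators, hence `ρ³ = 1`, while
`ρ ≠ 1` because `v₁ ≠ v₂`. -/

open IntermediateField

theorem IntermediateField.algHom_ext_of_adjoin_eq_top {K F L : Type*} [Field K] [Field F]
    [Field L] [Algebra K F] [Algebra K L] {s : Set F} (hs : adjoin K s = ⊤) {φ ψ : F →ₐ[K] L}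
    (h : s.EqOn φ ψ) : φ = ψ := by
  ext x
  induction (hs ▸ mem_top : x ∈ adjoin K s) using adjoin_induction with
  | mem x hx => exact h hx
  | algebraMap c => simp only [AlgHom.commutes]
  | add x y _ _ hx hy => simp only [map_add, hx, hy]
  | inv x _ hx => simp only [map_inv₀, hx]
  | mul x y _ _ hx hy => simp only [map_mul, hx, hy]

theorem AlgebraicIndependent.one_sub_add_mul_ne_zero {K F : Type*} [CommRing K] [Nontrivial K]
    [CommRing F] [Algebra K F] {x y : F} (h : AlgebraicIndependent K ![x, y]) :
    1 - x + x * y ≠ 0 := by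
  intro hzero
  have hpoly := h.eq_zero_of_aeval_eq_zero
    (1 - MvPolynomial.X 0 + MvPolynomial.X 0 * MvPolynomial.X 1) (by simpa using hzero)
  simpa using congrArg MvPolynomial.constantCoeff hpoly

namespace CremonaOrderThree

variable {K F : Type*} [Field K] [Field F] [Algebra K F] {v₁ v₂ : F} {ρ : F ≃ₐ[K] F}

theorem map_one_sub_add_mul (hv₁ : v₁ ≠ 0) (hv₂ : v₂ ≠ 0) (h1 : ρ v₁ = v₂)
    (h2 : ρ v₂ = -1 / (v₁ * v₂)) :
    ρ (1 - v₁ + v₁ * v₂) = -(1 - v₁ + v₁ * v₂) / v₁ := by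
  rw [map_add, map_sub, map_one, map_mul, h1, h2]
  field_simp
  ring

theorem map_one_div_one_sub_add_mul (hv₁ : v₁ ≠ 0) (hv₂ : v₂ ≠ 0) (h1 : ρ v₁ = v₂)
    (h2 : ρ v₂ = -1 / (v₁ * v₂)) :
    ρ (1 / (1 - v₁ + v₁ * v₂)) = -v₁ / (1 - v₁ + v₁ * v₂) := by
  rw [map_div₀, map_one, map_one_sub_add_mul hv₁ hv₂ h1 h2, one_div_div, div_neg, neg_div]

theorem map_neg_div_one_sub_add_mul (hv₁ : v₁ ≠ 0) (hv₂ : v₂ ≠ 0)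
    (hd : 1 - v₁ + v₁ * v₂ ≠ 0) (h1 : ρ v₁ = v₂) (h2 : ρ v₂ = -1 / (v₁ * v₂)) :
    ρ (-v₁ / (1 - v₁ + v₁ * v₂)) =
      -(1 / (1 - v₁ + v₁ * v₂)) - -v₁ / (1 - v₁ + v₁ * v₂) + 1 := by
  rw [map_div₀, map_neg, h1, map_one_sub_add_mul hv₁ hv₂ h1 h2]
  set d := 1 - v₁ + v₁ * v₂ with hd_def
  field_simp
  rw [hd_def]
  ring

theorem pow_three_eq_one (hgen : adjoin K {v₁, v₂} = ⊤) (hv₁ : v₁ ≠ 0) (hv₂ : v₂ ≠ 0)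
    (h1 : ρ v₁ = v₂) (h2 : ρ v₂ = -1 / (v₁ * v₂)) : ρ ^ 3 = 1 := by
  have h3 : ρ (-1 / (v₁ * v₂)) = v₁ := by
    rw [map_div₀, map_neg, map_one, map_mul, h1, h2]
    field_simp
  refine AlgEquiv.coe_toAlgHom_injective (algHom_ext_of_adjoin_eq_top hgen ?_)
  rintro x (rfl | rfl)
  · change ρ (ρ (ρ x)) = x
    rw [h1, h2, h3]
  · change ρ (ρ (ρ x)) = x
    rw [h2, h3, h1]

theorem orderOf_eq_three (hgen : adjoin K {v₁, v₂} = ⊤) (hv₁ : v₁ ≠ 0) (hv₂ : v₂ ≠ 0)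
    (hv₁₂ : v₁ ≠ v₂) (h1 : ρ v₁ = v₂) (h2 : ρ v₂ = -1 / (v₁ * v₂)) : orderOf ρ = 3 := by
  have : Fact (Nat.Prime 3) := ⟨Nat.prime_three⟩
  refine orderOf_eq_prime (pow_three_eq_one hgen hv₁ hv₂ h1 h2) fun hρ => hv₁₂ ?_
  rw [← h1, hρ, AlgEquiv.one_apply]

theorem adjoin_one_div_neg_div_eq {K F : Type*} [Field K] [Field F] [Algebra K F] {v₁ v₂ : F}
    (hv₁ : v₁ ≠ 0) (hd : 1 - v₁ + v₁ * v₂ ≠ 0) :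
    adjoin K {1 / (1 - v₁ + v₁ * v₂), -v₁ / (1 - v₁ + v₁ * v₂)} = adjoin K {v₁, v₂} := by
  set E := adjoin K {v₁, v₂}
  set E' := adjoin K {1 / (1 - v₁ + v₁ * v₂), -v₁ / (1 - v₁ + v₁ * v₂)}
  have hv₁E : v₁ ∈ E := subset_adjoin K _ (Set.mem_insert _ _)
  have hv₂E : v₂ ∈ E := subset_adjoin K _ (Set.mem_insert_of_mem _ rfl)
  have hw₁E' : 1 / (1 - v₁ + v₁ * v₂) ∈ E' := subset_adjoin K _ (Set.mem_insert _ _)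
  have hw₂E' : -v₁ / (1 - v₁ + v₁ * v₂) ∈ E' := subset_adjoin K _ (Set.mem_insert_of_mem _ rfl)
  have hdE : 1 - v₁ + v₁ * v₂ ∈ E := add_mem (sub_mem (one_mem _) hv₁E) (mul_mem hv₁E hv₂E)
  have hv₁E' : v₁ ∈ E' := by
    convert neg_mem (div_mem hw₂E' hw₁E') using 1
    field_simp
  have hv₂E' : v₂ ∈ E' := by
    convert div_mem (add_mem (sub_mem (inv_mem hw₁E') (one_mem _)) hv₁E') hv₁E' using 1
    field_simp
    ring
  apply le_antisymm
  · rw [adjoin_le_iff]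
    rintro x (rfl | rfl)
    · exact div_mem (one_mem _) hdE
    · exact div_mem (neg_mem hv₁E) hdE
  · rw [adjoin_le_iff]
    rintro x (rfl | rfl)
    · exact hv₁E'
    · exact hv₂E'

end CremonaOrderThree

/-- Let `K` be a field and `ρ` the `K`-automorphism of `K(v₁,v₂)` with
`ρ(v₁) = v₂`, `ρ(v₂) = -1/(v₁v₂)`. Then `ρ` has order 3, and with
`w₁ = 1/(1 - v₁ + v₁v₂)`, `w₂ = -v₁/(1 - v₁ + v₁v₂)`, one has `K(v₁,v₂) = K(w₁,w₂)`,
`ρ(w₁) = w₂` and `ρ(w₂) = -w₁ - w₂ + 1`. -/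
theorem stmt12 (K F : Type*) [Field K] [Field F] [Algebra K F]
    (v₁ v₂ : F) (hind : AlgebraicIndependent K ![v₁, v₂])
    (hgen : IntermediateField.adjoin K {v₁, v₂} = ⊤)
    (ρ : F ≃ₐ[K] F) (h1 : ρ v₁ = v₂) (h2 : ρ v₂ = -1 / (v₁ * v₂))
    (w₁ w₂ : F)
    (hw1 : w₁ = 1 / (1 - v₁ + v₁ * v₂))
    (hw2 : w₂ = -v₁ / (1 - v₁ + v₁ * v₂)) :
    orderOf ρ = 3 ∧ IntermediateField.adjoin K {w₁, w₂} = ⊤ ∧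
      ρ w₁ = w₂ ∧ ρ w₂ = -w₁ - w₂ + 1 := by
  have hv₁ : v₁ ≠ 0 := by simpa using hind.ne_zero 0
  have hv₂ : v₂ ≠ 0 := by simpa using hind.ne_zero 1
  have hv₁₂ : v₁ ≠ v₂ := fun h => zero_ne_one (hind.injective (by simpa using h) : (0 : Fin 2) = 1)
  have hd := hind.one_sub_add_mul_ne_zero
  subst hw1 hw2
  exact ⟨CremonaOrderThree.orderOf_eq_three hgen hv₁ hv₂ hv₁₂ h1 h2,
    (CremonaOrderThree.adjoin_one_div_neg_div_eq hv₁ hd).trans hgen,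
    CremonaOrderThree.map_one_div_one_sub_add_mul hv₁ hv₂ h1 h2,
    CremonaOrderThree.map_neg_div_one_sub_add_mul hv₁ hv₂ hd h1 h2⟩
end

section
/- Let ρ be the automorphism of Q(√5)(V, W) (rational functions in two variables V, W over Q(√5)) which sends √5 ↦ -√5, V ↦ 1/V, W ↦ 1/W. Set X = (1+V)/(1-V) and Y = (1+W)/(1-W). Then Q(√5)(V,W) = Q(√5)(X,Y), ρ(X) = -X, ρ(Y) = -Y, and the fixed field Q(√5)(V,W)^⟨ρ⟩ = Q(√5·X, √5·Y) is a rational function field in two variables over Q. -/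
open MvPolynomial

private theorem pow_mul_inv_pow {F : Type*} [Field F] {x : F} (hx : x ≠ 0) {m N : ℕ}
    (h : m ≤ N) : x ^ N * (x⁻¹) ^ m = x ^ (N - m) := by
  rw [inv_pow, pow_sub₀ _ hx h]

/-- If `a, b` are algebraically independent over a field `K`, so are `(1-a)⁻¹, (1-b)⁻¹`. -/
theorem aux_inv_shift {K F : Type*} [Field K] [Field F] [Algebra K F] {a b : F}
    (h : AlgebraicIndependent K ![a, b]) (ha0 : a ≠ 0) (ha1 : (1 : F) - a ≠ 0)
    (hb0 : b ≠ 0) (hb1 : (1 : F) - b ≠ 0) :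
    AlgebraicIndependent K ![(1 - a)⁻¹, (1 - b)⁻¹] := by
  rw [algebraicIndependent_iff] at h ⊢
  intro p hp
  set N := p.totalDegree with hN
  have hdeg : ∀ m ∈ p.support, m 0 ≤ N ∧ m 1 ≤ N := by
    intro m hm
    have h1 : (m.sum fun _ e => e) ≤ N := MvPolynomial.le_totalDegree hm
    rw [Finsupp.sum_fintype _ _ (fun _ => rfl), Fin.sum_univ_two] at h1
    omega
  set q : MvPolynomial (Fin 2) K :=
    ∑ m ∈ p.support, MvPolynomial.C (p.coeff m) * (1 - MvPolynomial.X 0) ^ (N - m 0)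
      * (1 - MvPolynomial.X 1) ^ (N - m 1) with hq
  have aevalq : ∀ x y : F, MvPolynomial.aeval (![x, y] : Fin 2 → F) q
      = ∑ m ∈ p.support, algebraMap K F (p.coeff m) * (1 - x) ^ (N - m 0)
        * (1 - y) ^ (N - m 1) := by
    intro x y
    rw [hq, map_sum]
    refine Finset.sum_congr rfl fun m hm => ?_
    simp [Matrix.cons_val_zero, Matrix.cons_val_one]
  have aevalp : ∀ x y : F, MvPolynomial.aeval (![x, y] : Fin 2 → F) p
      = ∑ m ∈ p.support, algebraMap K F (p.coeff m) * x ^ m 0 * y ^ m 1 := by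
    intro x y
    rw [MvPolynomial.aeval_def, MvPolynomial.eval₂_eq']
    refine Finset.sum_congr rfl fun m hm => ?_
    rw [Fin.prod_univ_two, mul_assoc]
    simp
  -- step 1 : q = 0
  have hq0 : q = 0 := by
    apply h
    rw [aevalq a b]
    rw [aevalp] at hp
    calc ∑ m ∈ p.support, algebraMap K F (p.coeff m) * (1 - a) ^ (N - m 0) * (1 - b) ^ (N - m 1)
        = (1-a)^N * (1-b)^N * ∑ m ∈ p.support,
            algebraMap K F (p.coeff m) * ((1-a)⁻¹) ^ m 0 * ((1-b)⁻¹) ^ m 1 := by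
          rw [Finset.mul_sum]
          refine Finset.sum_congr rfl fun m hm => ?_
          obtain ⟨h0, h1⟩ := hdeg m hm
          rw [← pow_mul_inv_pow ha1 h0, ← pow_mul_inv_pow hb1 h1]
          ring
      _ = 0 := by rw [hp]; ring
  -- step 2 : evaluate q at (1 - a⁻¹, 1 - b⁻¹)
  have hev : MvPolynomial.aeval (![1 - a⁻¹, 1 - b⁻¹] : Fin 2 → F) q = 0 := by
    rw [hq0, map_zero]
  rw [aevalq] at hev
  simp only [sub_sub_cancel] at hev
  -- multiply by a^N b^N
  have hfin : MvPolynomial.aeval (![a, b] : Fin 2 → F) p = 0 := by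
    rw [aevalp]
    have : ∑ m ∈ p.support, algebraMap K F (p.coeff m) * a ^ m 0 * b ^ m 1
        = a ^ N * b ^ N * ∑ m ∈ p.support,
            algebraMap K F (p.coeff m) * (a⁻¹) ^ (N - m 0) * (b⁻¹) ^ (N - m 1) := by
      rw [Finset.mul_sum]
      refine Finset.sum_congr rfl fun m hm => ?_
      obtain ⟨h0, h1⟩ := hdeg m hm
      have e0 : a ^ N * (a⁻¹) ^ (N - m 0) = a ^ m 0 := by
        rw [pow_mul_inv_pow ha0 (Nat.sub_le _ _), Nat.sub_sub_self h0]
      have e1 : b ^ N * (b⁻¹) ^ (N - m 1) = b ^ m 1 := by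
        rw [pow_mul_inv_pow hb0 (Nat.sub_le _ _), Nat.sub_sub_self h1]
      rw [← e0, ← e1]
      ring
    rw [this, hev, mul_zero]
  exact h p hfin

open IntermediateField

set_option maxHeartbeats 2000000 in
set_option synthInstance.maxHeartbeats 400000 in
/-- Let `ρ` be the automorphism of `ℚ(√5)(V,W)` with `√5 ↦ -√5`, `V ↦ 1/V`,
`W ↦ 1/W`. Set `X = (1+V)/(1-V)`, `Y = (1+W)/(1-W)`. Then `ℚ(√5)(V,W) = ℚ(√5)(X,Y)`,
`ρ(X) = -X`, `ρ(Y) = -Y`, and the fixed field `ℚ(√5)(V,W)^⟨ρ⟩ = ℚ(√5·X, √5·Y)` is a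
rational function field in two variables over `ℚ`. -/
theorem stmt15 (F : Type*) [Field F] [Algebra ℚ F]
    (sq5 : F) (h5 : sq5 ^ 2 = 5)
    (V W : F)
    (hind : AlgebraicIndependent (↥(IntermediateField.adjoin ℚ ({sq5} : Set F))) ![V, W])
    (hgen : IntermediateField.adjoin (↥(IntermediateField.adjoin ℚ ({sq5} : Set F)))
      ({V, W} : Set F) = ⊤)
    (ρ : F ≃ₐ[ℚ] F) (hρ5 : ρ sq5 = -sq5) (hV : ρ V = 1 / V) (hW : ρ W = 1 / W)
    (X Y : F) (hX : X = (1 + V) / (1 - V)) (hY : Y = (1 + W) / (1 - W)) :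
    IntermediateField.adjoin (↥(IntermediateField.adjoin ℚ ({sq5} : Set F)))
        ({X, Y} : Set F) = ⊤ ∧
      ρ X = -X ∧ ρ Y = -Y ∧
      IntermediateField.fixedField (Subgroup.zpowers ρ) =
        IntermediateField.adjoin ℚ {sq5 * X, sq5 * Y} ∧
      AlgebraicIndependent ℚ ![sq5 * X, sq5 * Y] := by
  haveI : CharZero F := charZero_of_injective_algebraMap (algebraMap ℚ F).injective
  set K := IntermediateField.adjoin ℚ ({sq5} : Set F) with hK
  -- basic transcendence facts
  have htV : Transcendental ℚ V := by
    have := hind.transcendental 0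
    simp only [Matrix.cons_val_zero] at this
    exact this.restrictScalars (algebraMap ℚ K).injective
  have htW : Transcendental ℚ W := by
    have := hind.transcendental 1
    simp only [Matrix.cons_val_one, Matrix.head_cons] at this
    exact this.restrictScalars (algebraMap ℚ K).injective
  have hQV : ∀ c : ℚ, V ≠ algebraMap ℚ F c := fun c hc => htV (hc ▸ isAlgebraic_algebraMap c)
  have hQW : ∀ c : ℚ, W ≠ algebraMap ℚ F c := fun c hc => htW (hc ▸ isAlgebraic_algebraMap c)
  have hV0 : V ≠ 0 := by simpa using hQV 0
  have hW0 : W ≠ 0 := by simpa using hQW 0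
  have hV1 : (1 : F) - V ≠ 0 := by
    rw [sub_ne_zero]; symm; simpa using hQV 1
  have hW1 : (1 : F) - W ≠ 0 := by
    rw [sub_ne_zero]; symm; simpa using hQW 1
  have hs0 : sq5 ≠ 0 := by
    intro h; rw [h] at h5; norm_num at h5
  -- X and Y basics
  have hX1 : X + 1 = 2 / (1 - V) := by rw [hX]; field_simp; ring
  have hY1 : Y + 1 = 2 / (1 - W) := by rw [hY]; field_simp; ring
  have hXne : X + 1 ≠ 0 := hX1 ▸ div_ne_zero two_ne_zero hV1
  have hYne : Y + 1 ≠ 0 := hY1 ▸ div_ne_zero two_ne_zero hW1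
  have hV1' : V - 1 ≠ 0 := by rw [← neg_sub]; exact neg_ne_zero.2 hV1
  have hW1' : W - 1 ≠ 0 := by rw [← neg_sub]; exact neg_ne_zero.2 hW1
  have hVX : V = (X - 1) / (X + 1) := by
    rw [eq_div_iff hXne, hX]; field_simp; ring
  have hWY : W = (Y - 1) / (Y + 1) := by
    rw [eq_div_iff hYne, hY]; field_simp; ring
  -- Part 2
  have hρX : ρ X = -X := by
    rw [hX, map_div₀, map_add, map_sub, map_one, hV]
    field_simp
    ring
  have hρY : ρ Y = -Y := by
    rw [hY, map_div₀, map_add, map_sub, map_one, hW]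
    field_simp
    ring
  -- Part 1
  have part1 : IntermediateField.adjoin K ({X, Y} : Set F) = ⊤ := by
    rw [eq_top_iff, ← hgen]
    rw [IntermediateField.adjoin_le_iff]
    rintro x (rfl | rfl)
    · rw [hVX]
      exact div_mem (sub_mem (subset_adjoin _ _ (Set.mem_insert _ _)) (one_mem _))
        (add_mem (subset_adjoin _ _ (Set.mem_insert _ _)) (one_mem _))
    · rw [hWY]
      exact div_mem
        (sub_mem (subset_adjoin _ _ (Set.mem_insert_of_mem _ rfl)) (one_mem _))
        (add_mem (subset_adjoin _ _ (Set.mem_insert_of_mem _ rfl)) (one_mem _))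
  -- notation
  set u := sq5 * X with hu
  set v := sq5 * Y with hv
  have hρu : ρ u = u := by rw [hu, map_mul, hρ5, hρX]; ring
  have hρv : ρ v = v := by rw [hv, map_mul, hρ5, hρY]; ring
  -- ρ is an involution
  have hKfix : ∀ x ∈ K, ρ (ρ x) = x := by
    intro x hx
    rw [hK] at hx
    induction hx using IntermediateField.adjoin_induction with
    | mem t ht =>
      rcases ht with rfl
      rw [hρ5, map_neg, hρ5, neg_neg]
    | algebraMap c => rw [AlgEquiv.commutes, AlgEquiv.commutes]
    | add x y hx hy ihx ihy => rw [map_add, map_add, ihx, ihy]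
    | inv x hx ihx => rw [map_inv₀, map_inv₀, ihx]
    | mul x y hx hy ihx ihy => rw [map_mul, map_mul, ihx, ihy]
  have hρ2 : ∀ x : F, ρ (ρ x) = x := by
    intro x
    have hx : x ∈ IntermediateField.adjoin K ({V, W} : Set F) := by
      rw [hgen]; exact IntermediateField.mem_top
    induction hx using IntermediateField.adjoin_induction with
    | mem t ht =>
      rcases ht with rfl | rfl
      · rw [hV, one_div, map_inv₀, hV, one_div, inv_inv]
      · rw [hW, one_div, map_inv₀, hW, one_div, inv_inv]
    | algebraMap c => exact hKfix c c.2
    | add x y hx hy ihx ihy => rw [map_add, map_add, ihx, ihy]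
    | inv x hx ihx => rw [map_inv₀, map_inv₀, ihx]
    | mul x y hx hy ihx ihy => rw [map_mul, map_mul, ihx, ihy]
  have hρsq : ρ ^ 2 = 1 := by
    ext x
    rw [pow_two, AlgEquiv.mul_apply, hρ2 x, AlgEquiv.one_apply]
  have hρne : ρ ≠ 1 := by
    intro h
    rw [h, AlgEquiv.one_apply] at hρ5
    have h2 : (2 : F) * sq5 = 0 := by linear_combination hρ5
    exact hs0 ((mul_eq_zero.1 h2).resolve_left two_ne_zero)
  haveI : Fact (Nat.Prime 2) := ⟨Nat.prime_two⟩
  have horder : orderOf ρ = 2 := orderOf_eq_prime hρsq hρne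
  have hfo : IsOfFinOrder ρ := by
    rw [← orderOf_pos_iff, horder]; norm_num
  haveI : Finite (Subgroup.zpowers ρ) := (finite_zpowers.2 hfo).to_subtype
  haveI : Fintype (Subgroup.zpowers ρ) := Fintype.ofFinite _
  have hfr : Module.finrank (IntermediateField.fixedField (Subgroup.zpowers ρ)) F = 2 := by
    have h1 : Module.finrank (FixedPoints.subfield (Subgroup.zpowers ρ) F) F
        = Fintype.card (Subgroup.zpowers ρ) := FixedPoints.finrank_eq_card _ F
    rw [← Nat.card_eq_fintype_card, Nat.card_zpowers, horder] at h1
    exact h1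
  -- L = ℚ(u, v) is contained in the fixed field
  have hstab : ∀ {t : F}, ρ t = t → ∀ g : (Subgroup.zpowers ρ), g • t = t := by
    intro t ht g
    have hle : Subgroup.zpowers ρ ≤ MulAction.stabilizer (F ≃ₐ[ℚ] F) t :=
      Subgroup.zpowers_le.2 ht
    exact hle g.2
  set L := IntermediateField.adjoin ℚ ({u, v} : Set F) with hL
  have hLle : L ≤ IntermediateField.fixedField (Subgroup.zpowers ρ) := by
    rw [hL, IntermediateField.adjoin_le_iff]
    rintro x (rfl | rfl)
    · exact fun g => hstab hρu g
    · exact fun g => hstab hρv g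
  -- V, W are rational in u, v, sq5
  have husq : u + sq5 ≠ 0 := by
    have e : u + sq5 = sq5 * (X + 1) := by rw [hu]; ring
    rw [e]; exact mul_ne_zero hs0 hXne
  have hvsq : v + sq5 ≠ 0 := by
    have e : v + sq5 = sq5 * (Y + 1) := by rw [hv]; ring
    rw [e]; exact mul_ne_zero hs0 hYne
  have hVu : V = (u - sq5) / (u + sq5) := by
    rw [eq_div_iff husq, hu, hX]; field_simp; ring
  have hWv : W = (v - sq5) / (v + sq5) := by
    rw [eq_div_iff hvsq, hv, hY]; field_simp; ring
  -- sq5 is algebraic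
  have hsalg : IsAlgebraic ℚ sq5 :=
    ⟨Polynomial.X ^ 2 - Polynomial.C 5, Polynomial.X_pow_sub_C_ne_zero two_pos 5, by simp [h5]⟩
  have hsint : IsIntegral L sq5 := isAlgebraic_iff_isIntegral.1 (hsalg.tower_top L)
  -- F = L(sq5)
  have hLtop : IntermediateField.adjoin L ({sq5} : Set F) = ⊤ := by
    set M := IntermediateField.adjoin L ({sq5} : Set F) with hM
    have hLM : ∀ x ∈ L, x ∈ M := fun x hx => M.algebraMap_mem (⟨x, hx⟩ : L)
    have hsM : sq5 ∈ M := subset_adjoin _ _ rfl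
    have hVM : V ∈ M := by
      rw [hVu]
      exact div_mem (sub_mem (hLM u (subset_adjoin _ _ (Set.mem_insert _ _))) hsM)
        (add_mem (hLM u (subset_adjoin _ _ (Set.mem_insert _ _))) hsM)
    have hWM : W ∈ M := by
      rw [hWv]
      exact div_mem (sub_mem (hLM v (subset_adjoin _ _ (Set.mem_insert_of_mem _ rfl))) hsM)
        (add_mem (hLM v (subset_adjoin _ _ (Set.mem_insert_of_mem _ rfl))) hsM)
    have hKM : ∀ x ∈ K, x ∈ M := by
      intro x hx
      rw [hK] at hx
      induction hx using IntermediateField.adjoin_induction with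
      | mem t ht => rcases ht with rfl; exact hsM
      | algebraMap c =>
        rw [IsScalarTower.algebraMap_apply ℚ (↥L) F]
        exact M.algebraMap_mem _
      | add x y hx hy ihx ihy => exact add_mem ihx ihy
      | inv x hx ihx => exact inv_mem ihx
      | mul x y hx hy ihx ihy => exact mul_mem ihx ihy
    rw [eq_top_iff]
    intro x hxt
    clear hxt
    have hx : x ∈ IntermediateField.adjoin K ({V, W} : Set F) := by
      rw [hgen]; exact IntermediateField.mem_top
    induction hx using IntermediateField.adjoin_induction with
    | mem t ht => rcases ht with rfl | rfl; exacts [hVM, hWM]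
    | algebraMap c => exact hKM c c.2
    | add x y hx hy ihx ihy => exact add_mem ihx ihy
    | inv x hx ihx => exact inv_mem ihx
    | mul x y hx hy ihx ihy => exact mul_mem ihx ihy
  haveI hfd : FiniteDimensional L F := by
    haveI h1 : FiniteDimensional L (IntermediateField.adjoin L ({sq5} : Set F)) :=
      IntermediateField.adjoin.finiteDimensional hsint
    rw [hLtop] at h1
    exact Module.Finite.equiv IntermediateField.topEquiv.toLinearEquiv
  have hfrL : Module.finrank L F ≤ 2 := by
    have e1 : Module.finrank L F = Module.finrank L (⊤ : IntermediateField L F) :=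
      (IntermediateField.topEquiv (F := L) (E := F)).toLinearEquiv.finrank_eq.symm
    rw [e1, ← hLtop, IntermediateField.adjoin.finrank hsint]
    have hple : (minpoly L sq5).degree ≤ (Polynomial.X ^ 2 - Polynomial.C (5 : L)).degree :=
      minpoly.degree_le_of_ne_zero L sq5 (Polynomial.X_pow_sub_C_ne_zero two_pos 5)
        (by simp [h5, map_ofNat])
    have := Polynomial.natDegree_le_natDegree hple
    rwa [Polynomial.natDegree_X_pow_sub_C] at this
  have part3 : IntermediateField.fixedField (Subgroup.zpowers ρ) = L := by
    refine (IntermediateField.eq_of_le_of_finrank_le' hLle ?_).symm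
    rw [hfr]
    exact hfrL
  -- Part 4 : algebraic independence of u, v over ℚ
  set s' : K := ⟨sq5, subset_adjoin _ _ rfl⟩ with hs'
  have halgmap : algebraMap K F s' = sq5 := rfl
  haveI : CharZero K := charZero_of_injective_algebraMap (algebraMap ℚ K).injective
  have hs'ne : (2 : K) * s' ≠ 0 := by
    refine mul_ne_zero two_ne_zero fun h => hs0 ?_
    simpa [halgmap] using congrArg (algebraMap K F) h
  have hab := aux_inv_shift hind hV0 hV1 hW0 hW1
  have hf : Transcendental K (Polynomial.C ((2 : K) * s') * Polynomial.X + Polynomial.C (-s')) := by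
    refine Polynomial.transcendental _ (by rw [Polynomial.natDegree_linear hs'ne]; norm_num) ?_
    rw [Polynomial.leadingCoeff_linear hs'ne]
    exact mem_nonZeroDivisors_of_ne_zero hs'ne
  have happ := hab.polynomial_aeval_of_transcendental (f := fun _ : Fin 2 =>
    Polynomial.C ((2 : K) * s') * Polynomial.X + Polynomial.C (-s')) (fun _ => hf)
  have heq : (fun i => Polynomial.aeval ((![(1 - V)⁻¹, (1 - W)⁻¹] : Fin 2 → F) i)
      (Polynomial.C ((2 : K) * s') * Polynomial.X + Polynomial.C (-s'))) = ![u, v] := by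
    funext i
    fin_cases i
    · show Polynomial.aeval ((1 - V)⁻¹)
        (Polynomial.C ((2 : K) * s') * Polynomial.X + Polynomial.C (-s')) = u
      rw [map_add, map_mul, Polynomial.aeval_C, Polynomial.aeval_C, Polynomial.aeval_X,
        map_mul, map_neg, halgmap, map_ofNat, hu, hX]
      field_simp
      ring
    · show Polynomial.aeval ((1 - W)⁻¹)
        (Polynomial.C ((2 : K) * s') * Polynomial.X + Polynomial.C (-s')) = v
      rw [map_add, map_mul, Polynomial.aeval_C, Polynomial.aeval_C, Polynomial.aeval_X,
        map_mul, map_neg, halgmap, map_ofNat, hv, hY]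
      field_simp
      ring
  rw [heq] at happ
  have part4 : AlgebraicIndependent ℚ ![u, v] :=
    happ.restrictScalars (algebraMap ℚ K).injective
  exact ⟨part1, hρX, hρY, part3, part4⟩
end
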